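/- arXiv:2408.00708 — 5 statements merged into one kernel-verified Lean document; each statement's English description precedes it below -/
import Mathlib

section
/- Let X be a real normed linear space and let x, y ∈ X with x ≠ 0. Then ρ'₊(x, y) = 0 if and only if there exists f₀ ∈ J(x) with f₀(y) = 0, and for every f ∈ J(x) and every t ∈ (0, 1), f(−t x + (1 − t) y) ≠ 0. -/
open Filter Set

/-- The norm derivative `ρ'₊(x,y) = lim_{t→0⁺} ‖x‖(‖x+ty‖−‖x‖)/t`.
(This one-sided limit always exists by convexity of the norm, so `limUnder` picks it.) -/
noncomputable def rhoP {X : Type*} [NormedAddCommGroup X] [NormedSpace ℝ X] (x y : X) : ℝ :=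
  limUnder (nhdsWithin (0 : ℝ) (Set.Ioi 0))
    (fun t : ℝ => ‖x‖ * (‖x + t • y‖ - ‖x‖) / t)

/-- The norm derivative `ρ'₋(x,y) = lim_{t→0⁻} ‖x‖(‖x+ty‖−‖x‖)/t`. -/
noncomputable def rhoM {X : Type*} [NormedAddCommGroup X] [NormedSpace ℝ X] (x y : X) : ℝ :=
  limUnder (nhdsWithin (0 : ℝ) (Set.Iio 0))
    (fun t : ℝ => ‖x‖ * (‖x + t • y‖ - ‖x‖) / t)

/-- `ρ'(x,y) = (ρ'₊(x,y) + ρ'₋(x,y))/2`. -/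
noncomputable def rho {X : Type*} [NormedAddCommGroup X] [NormedSpace ℝ X] (x y : X) : ℝ :=
  (rhoP x y + rhoM x y) / 2

/-- The set of support functionals at `x`. -/
def suppJ {X : Type*} [NormedAddCommGroup X] [NormedSpace ℝ X] (x : X) :
    Set (X →L[ℝ] ℝ) :=
  {f | ‖f‖ = 1 ∧ f x = ‖x‖}

/-! For `x ≠ 0`, `ρ'₊(x, y) = ‖x‖ · D(x; y)`, where `D(x; ·)` is the right directional
derivative of the norm at `x`: a sublinear functional dominated by the norm. The support
functionals at `x` are exactly the continuous linear functionals below `D(x; ·)`, so by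
Hahn–Banach `D(x; y) = max {f y | f ∈ J(x)}`. As `f (-t • x + (1 - t) • y) = (1 - t) f(y) - t ‖x‖`,
the second condition says `f y ≤ 0` on `J(x)`; with the first, it says that this maximum is `0`. -/

section DirectionalDerivative

variable {E : Type*} [AddCommGroup E] [Module ℝ E]

noncomputable def rightDirDeriv (φ : E → ℝ) (x z : E) : ℝ :=
  derivWithin (fun t : ℝ => φ (x + t • z)) (Ioi 0) 0

variable {φ : E → ℝ}

theorem ConvexOn.comp_line (hφ : ConvexOn ℝ univ φ) (x z : E) :
    ConvexOn ℝ univ (fun t : ℝ => φ (x + t • z)) :=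
  (hφ.translate_right x).comp_linearMap (LinearMap.toSpanSingleton ℝ E z)

theorem ConvexOn.hasDerivWithinAt_rightDirDeriv (hφ : ConvexOn ℝ univ φ) (x z : E) :
    HasDerivWithinAt (fun t : ℝ => φ (x + t • z)) (rightDirDeriv φ x z) (Ioi 0) 0 :=
  (hφ.comp_line x z).hasDerivWithinAt_rightDeriv_of_mem_interior (by simp)

theorem ConvexOn.tendsto_rightDirDeriv (hφ : ConvexOn ℝ univ φ) (x z : E) :
    Tendsto (fun t : ℝ => (φ (x + t • z) - φ x) / t) (nhdsWithin 0 (Ioi 0))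
      (nhds (rightDirDeriv φ x z)) := by
  simpa only [slope_fun_def_field, sub_zero, zero_smul, add_zero] using
    (hasDerivWithinAt_iff_tendsto_slope' self_notMem_Ioi).1
      (hφ.hasDerivWithinAt_rightDirDeriv x z)

theorem ConvexOn.rightDirDeriv_le_slope (hφ : ConvexOn ℝ univ φ) (x z : E) {t : ℝ} (ht : 0 < t) :
    rightDirDeriv φ x z ≤ (φ (x + t • z) - φ x) / t := by
  simpa only [rightDirDeriv, slope_def_field, sub_zero, zero_smul, add_zero] using
    (hφ.comp_line x z).rightDeriv_le_slope_of_mem_interior (by simp) (mem_univ t) ht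

theorem ConvexOn.rightDirDeriv_le_sub (hφ : ConvexOn ℝ univ φ) (x z : E) :
    rightDirDeriv φ x z ≤ φ (x + z) - φ x := by
  simpa using hφ.rightDirDeriv_le_slope x z one_pos

theorem ConvexOn.rightDirDeriv_smul (hφ : ConvexOn ℝ univ φ) (x z : E) {c : ℝ} (hc : 0 < c) :
    rightDirDeriv φ x (c • z) = c * rightDirDeriv φ x z := by
  have hmul : HasDerivWithinAt (fun t : ℝ => c * t) c (Ioi 0) 0 := by
    simpa using (hasDerivAt_id (0 : ℝ)).const_mul c |>.hasDerivWithinAt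
  have hcomp := (hφ.hasDerivWithinAt_rightDirDeriv x z).scomp_of_eq 0 hmul
    (fun t (ht : 0 < t) => mul_pos hc ht) (mul_zero c).symm
  have heq : (fun t : ℝ => φ (x + t • z)) ∘ (fun t => c * t) = fun t => φ (x + t • c • z) := by
    ext t; simp [smul_smul, mul_comm]
  rw [heq] at hcomp
  exact hcomp.derivWithin (uniqueDiffWithinAt_Ioi 0)

theorem ConvexOn.rightDirDeriv_add_le (hφ : ConvexOn ℝ univ φ) (x z w : E) :
    rightDirDeriv φ x (z + w) ≤ rightDirDeriv φ x z + rightDirDeriv φ x w := by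
  -- `x + t • (z + w)` is the midpoint of `x + t • 2z` and `x + t • 2w`;
  -- homogeneity then absorbs the `2`.
  have hmid : ∀ t : ℝ, 0 < t → (φ (x + t • (z + w)) - φ x) / t ≤
      ((φ (x + t • (2 : ℝ) • z) - φ x) / t + (φ (x + t • (2 : ℝ) • w) - φ x) / t) / 2 := by
    intro t ht
    have h := hφ.2 (mem_univ (x + t • (2 : ℝ) • z)) (mem_univ (x + t • (2 : ℝ) • w))
      (by norm_num : (0 : ℝ) ≤ 1 / 2) (by norm_num : (0 : ℝ) ≤ 1 / 2) (by norm_num)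
    have hpt : (1 / 2 : ℝ) • (x + t • (2 : ℝ) • z) + (1 / 2 : ℝ) • (x + t • (2 : ℝ) • w) =
        x + t • (z + w) := by module
    rw [hpt, smul_eq_mul, smul_eq_mul] at h
    rw [← add_div, div_div, div_le_div_iff₀ ht (by positivity)]
    nlinarith
  have hlim := ((hφ.tendsto_rightDirDeriv x ((2 : ℝ) • z)).add
    (hφ.tendsto_rightDirDeriv x ((2 : ℝ) • w))).div_const 2
  rw [hφ.rightDirDeriv_smul x z two_pos, hφ.rightDirDeriv_smul x w two_pos, ← mul_add,
    mul_div_cancel_left₀ _ two_ne_zero] at hlim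
  refine le_of_tendsto_of_tendsto (hφ.tendsto_rightDirDeriv x (z + w)) hlim ?_
  filter_upwards [self_mem_nhdsWithin] with t ht using hmid t ht

end DirectionalDerivative

theorem exists_linearMap_le_sublinear_eq {E : Type*} [AddCommGroup E] [Module ℝ E] {N : E → ℝ}
    (N_hom : ∀ c : ℝ, 0 < c → ∀ x, N (c • x) = c * N x) (N_add : ∀ x y, N (x + y) ≤ N x + N y)
    (y : E) : ∃ g : E →ₗ[ℝ] ℝ, (∀ z, g z ≤ N z) ∧ g y = N y := by
  have N_zero : N 0 = 0 := by
    have h := N_hom 2 two_pos 0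
    rw [smul_zero] at h
    linarith
  have hline : ∀ c : ℝ, c * N y ≤ N (c • y) := by
    intro c
    rcases lt_trichotomy c 0 with hc | rfl | hc
    · have hsum : 0 ≤ N y + N (-y) := by simpa [N_zero] using N_add y (-y)
      rw [← neg_neg c, neg_smul, ← smul_neg, N_hom _ (neg_pos.2 hc)]
      nlinarith
    · simp [N_zero]
    · rw [N_hom c hc]
  let p : E →ₗ.[ℝ] ℝ := LinearPMap.mkSpanSingleton' y (N y) fun c hc =>
    (smul_eq_zero.1 hc).elim (fun h => by simp [h]) (fun h => by simp [h, N_zero])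
  obtain ⟨g, hgp, hgN⟩ := exists_extension_of_le_sublinear p N N_hom N_add (by
    rintro ⟨_, hu⟩
    obtain ⟨c, rfl⟩ := Submodule.mem_span_singleton.1 hu
    rw [LinearPMap.mkSpanSingleton'_apply]
    exact hline c)
  exact ⟨g, hgN, (hgp ⟨y, Submodule.mem_span_singleton_self y⟩).trans
    (LinearPMap.mkSpanSingleton'_apply_self _ _ _ _)⟩

theorem forall_mem_Ioo_neg_mul_add_ne_zero_iff {a b : ℝ} (hb : 0 < b) :
    (∀ t ∈ Ioo (0 : ℝ) 1, -t * b + (1 - t) * a ≠ 0) ↔ a ≤ 0 := by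
  refine ⟨fun h => ?_, fun ha t ht => by nlinarith [ht.1, ht.2]⟩
  by_contra! ha
  refine h (a / (a + b)) ⟨by positivity, (div_lt_one (by positivity)).2 (by linarith)⟩ ?_
  field_simp
  ring

section SupportFunctionals

variable {X : Type*} [NormedAddCommGroup X] [NormedSpace ℝ X]

theorem rhoP_eq_norm_mul_rightDirDeriv (x y : X) :
    rhoP x y = ‖x‖ * rightDirDeriv norm x y := by
  refine Tendsto.limUnder_eq ?_
  simpa only [mul_div_assoc] using (convexOn_univ_norm.tendsto_rightDirDeriv x y).const_mul ‖x‖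

theorem rightDirDeriv_norm_le (x z : X) : rightDirDeriv norm x z ≤ ‖z‖ := by
  linarith [convexOn_univ_norm.rightDirDeriv_le_sub x z, norm_add_le x z]

theorem le_rightDirDeriv_norm_of_mem_suppJ {x : X} {f : X →L[ℝ] ℝ} (hf : f ∈ suppJ x) (z : X) :
    f z ≤ rightDirDeriv norm x z := by
  refine ge_of_tendsto (convexOn_univ_norm.tendsto_rightDirDeriv x z) ?_
  filter_upwards [self_mem_nhdsWithin] with t (ht : 0 < t)
  have h : f (x + t • z) ≤ ‖x + t • z‖ :=
    (le_abs_self _).trans (by simpa [hf.1] using f.le_opNorm (x + t • z))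
  rw [map_add, map_smul, smul_eq_mul, hf.2] at h
  rw [le_div_iff₀ ht]
  linarith

theorem norm_apply_le_of_le_rightDirDeriv_norm {x : X} {g : X →ₗ[ℝ] ℝ}
    (hg : ∀ z, g z ≤ rightDirDeriv norm x z) (z : X) : ‖g z‖ ≤ ‖z‖ := by
  have h := (hg (-z)).trans (rightDirDeriv_norm_le x (-z))
  rw [map_neg, norm_neg] at h
  rw [Real.norm_eq_abs, abs_le]
  constructor <;> linarith [(hg z).trans (rightDirDeriv_norm_le x z)]

theorem mem_suppJ_of_le_rightDirDeriv_norm {x : X} (hx : x ≠ 0) {f : X →L[ℝ] ℝ}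
    (hf : ∀ z, f z ≤ rightDirDeriv norm x z) : f ∈ suppJ x := by
  have hfx : f x = ‖x‖ := by
    have hle := (hf x).trans (rightDirDeriv_norm_le x x)
    have hge := (hf (-x)).trans (convexOn_univ_norm.rightDirDeriv_le_sub x (-x))
    rw [map_neg, add_neg_cancel, norm_zero] at hge
    linarith
  have hnorm_le : ‖f‖ ≤ 1 := f.opNorm_le_bound zero_le_one fun z => by
    simpa using norm_apply_le_of_le_rightDirDeriv_norm (g := f.toLinearMap) hf z
  refine ⟨le_antisymm hnorm_le ?_, hfx⟩
  have h := f.le_opNorm x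
  rw [hfx, norm_norm] at h
  exact (le_mul_iff_one_le_left (norm_pos_iff.2 hx)).1 h

theorem exists_mem_suppJ_apply_eq_rightDirDeriv_norm {x : X} (hx : x ≠ 0) (y : X) :
    ∃ f ∈ suppJ x, f y = rightDirDeriv norm x y := by
  obtain ⟨g, hgD, hgy⟩ := exists_linearMap_le_sublinear_eq
    (fun c hc z => convexOn_univ_norm.rightDirDeriv_smul x z hc)
    (convexOn_univ_norm.rightDirDeriv_add_le x) y
  have hg z : ‖g z‖ ≤ 1 * ‖z‖ := (one_mul ‖z‖).symm ▸ norm_apply_le_of_le_rightDirDeriv_norm hgD z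
  exact ⟨g.mkContinuous 1 hg, mem_suppJ_of_le_rightDirDeriv_norm hx hgD, hgy⟩

theorem isGreatest_rightDirDeriv_norm {x : X} (hx : x ≠ 0) (y : X) :
    IsGreatest ((fun f : X →L[ℝ] ℝ => f y) '' suppJ x) (rightDirDeriv norm x y) :=
  ⟨exists_mem_suppJ_apply_eq_rightDirDeriv_norm hx y, by
    rintro _ ⟨f, hf, rfl⟩
    exact le_rightDirDeriv_norm_of_mem_suppJ hf y⟩

end SupportFunctionals

/-- Characterization of ρ₊-orthogonality. -/
theorem rhoP_orthogonality_iff {X : Type*} [NormedAddCommGroup X] [NormedSpace ℝ X]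
    (x y : X) (hx : x ≠ 0) :
    rhoP x y = 0 ↔
      ((∃ f₀ ∈ suppJ x, f₀ y = 0) ∧
        ∀ f ∈ suppJ x, ∀ t ∈ Set.Ioo (0 : ℝ) 1, f (-t • x + (1 - t) • y) ≠ 0) := by
  have hJ := isGreatest_rightDirDeriv_norm hx y
  have hseg : ∀ f ∈ suppJ x,
      (∀ t ∈ Ioo (0 : ℝ) 1, f (-t • x + (1 - t) • y) ≠ 0) ↔ f y ≤ 0 := fun f hf => by
    simpa only [map_add, map_smul, smul_eq_mul, hf.2] using
      forall_mem_Ioo_neg_mul_add_ne_zero_iff (a := f y) (norm_pos_iff.2 hx)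
  rw [rhoP_eq_norm_mul_rightDirDeriv, mul_eq_zero, or_iff_right (norm_ne_zero_iff.2 hx)]
  constructor
  · intro h
    rw [h] at hJ
    exact ⟨hJ.1, fun f hf => (hseg f hf).2 (hJ.2 ⟨f, hf, rfl⟩)⟩
  · rintro ⟨⟨f₀, hf₀, hf₀y⟩, hall⟩
    obtain ⟨f, hf, hfy⟩ := hJ.1
    exact le_antisymm (hfy ▸ (hseg f hf).1 (hall f hf)) (hf₀y ▸ hJ.2 ⟨f₀, hf₀, rfl⟩)
end

section
/- Let X be a real normed linear space and let x ∈ X with x ≠ 0. Then x is ρ₊-smooth if and only if the set x^{⊥₊} = {y ∈ X : ρ'₊(x,y) = 0} is a linear subspace of X of codimension one (i.e., a maximal proper linear subspace of X). -/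
open Filter Set

/-!
`ρ'₊(x, y)` is `‖x‖` times the right derivative at `0` of the convex function
`t ↦ ‖x + t • y‖`, so `ρ'₊(x, ·)` is positively homogeneous and subadditive, and
`ρ'₊(x, y + s • x) = ρ'₊(x, y) + s‖x‖²`. If `ρ'₊(x, ·)` is additive it is therefore a linear
functional, nonzero because `ρ'₊(x, x) = ‖x‖²`, and `x^{⊥₊}` is its kernel, a hyperplane.
Conversely, if `x^{⊥₊}` is a hyperplane `M`, then `x ∉ M`, so `X = M ⊕ ℝx` and
`ρ'₊(x, m + s • x) = s‖x‖²` is additive.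
-/

open Topology

lemma tendsto_const_mul_nhdsGT_zero {𝕜 : Type*} [Field 𝕜] [LinearOrder 𝕜] [IsStrictOrderedRing 𝕜]
    [TopologicalSpace 𝕜] [OrderTopology 𝕜] {c : 𝕜} (hc : 0 < c) :
    Tendsto (c * ·) (𝓝[>] 0) (𝓝[>] 0) := by
  simpa only [comap_mulLeft_nhdsGT_zero hc] using tendsto_comap (f := (c * ·)) (x := 𝓝[>] 0)

section NormDerivative

variable {X : Type*} [NormedAddCommGroup X] [NormedSpace ℝ X]

lemma convexOn_norm_add_smul (x y : X) : ConvexOn ℝ univ (fun t : ℝ => ‖x + t • y‖) :=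
  ((convexOn_norm convex_univ).translate_right x).comp_linearMap
    (LinearMap.toSpanSingleton ℝ X y)

lemma tendsto_rhoP (x y : X) :
    Tendsto (fun t : ℝ => ‖x‖ * (‖x + t • y‖ - ‖x‖) / t) (𝓝[>] 0) (𝓝 (rhoP x y)) := by
  have hderiv := (convexOn_norm_add_smul x y).hasDerivWithinAt_rightDeriv_of_mem_interior
    (x := 0) (by simp)
  rw [hasDerivWithinAt_iff_tendsto_slope, Set.sdiff_singleton_eq_self Set.self_notMem_Ioi]
    at hderiv
  have hlim := hderiv.const_mul ‖x‖
  have hquot : (fun t => ‖x‖ * slope (fun t : ℝ => ‖x + t • y‖) 0 t) =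
      fun t : ℝ => ‖x‖ * (‖x + t • y‖ - ‖x‖) / t := by
    ext t; simp [slope_def_field, mul_div_assoc]
  rw [hquot] at hlim
  rwa [rhoP, hlim.limUnder_eq]

lemma rhoP_smul_self (x : X) (s : ℝ) : rhoP x (s • x) = s * ‖x‖ ^ 2 := by
  have hpos : ∀ᶠ t : ℝ in 𝓝[>] 0, 0 < 1 + t * s := by
    have hcont : Tendsto (fun t : ℝ => 1 + t * s) (𝓝 0) (𝓝 (1 + 0 * s)) :=
      (continuous_const.add (continuous_id.mul continuous_const)).tendsto 0
    exact nhdsWithin_le_nhds (hcont.eventually_const_lt (by simp))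
  have hquot : ∀ᶠ t in 𝓝[>] 0, s * ‖x‖ ^ 2 = ‖x‖ * (‖x + t • s • x‖ - ‖x‖) / t := by
    filter_upwards [hpos, self_mem_nhdsWithin] with t ht ht0
    have ht0 : t ≠ 0 := ne_of_gt ht0
    rw [show x + t • s • x = (1 + t * s) • x by module, norm_smul, Real.norm_of_nonneg ht.le]
    field_simp
    ring
  exact (tendsto_const_nhds.congr' hquot).limUnder_eq

lemma rhoP_zero (x : X) : rhoP x 0 = 0 := by
  simpa using rhoP_smul_self x 0

lemma rhoP_self_ne_zero {x : X} (hx : x ≠ 0) : rhoP x x ≠ 0 := by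
  have hself : rhoP x x = ‖x‖ ^ 2 := by simpa using rhoP_smul_self x 1
  rw [hself]
  positivity

lemma rhoP_smul_of_pos (x y : X) {c : ℝ} (hc : 0 < c) : rhoP x (c • y) = c * rhoP x y := by
  have hlim := ((tendsto_rhoP x y).comp (tendsto_const_mul_nhdsGT_zero hc)).const_mul c
  refine (hlim.congr' ?_).limUnder_eq
  filter_upwards [self_mem_nhdsWithin] with t ht
  have ht : t ≠ 0 := ne_of_gt ht
  simp only [Function.comp_apply, smul_smul, mul_comm t c]
  field_simp

lemma rhoP_add_le (x y z : X) : rhoP x (y + z) ≤ rhoP x y + rhoP x z := by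
  have hscale := tendsto_const_mul_nhdsGT_zero (two_pos : (0 : ℝ) < 2)
  refine le_of_tendsto_of_tendsto (tendsto_rhoP x (y + z))
    (((tendsto_rhoP x y).comp hscale).add ((tendsto_rhoP x z).comp hscale)) ?_
  filter_upwards [self_mem_nhdsWithin] with t (ht : 0 < t)
  have hmid : 2 * ‖x + t • (y + z)‖ ≤ ‖x + (2 * t) • y‖ + ‖x + (2 * t) • z‖ := by
    calc 2 * ‖x + t • (y + z)‖ = ‖(2 : ℝ) • (x + t • (y + z))‖ := by
          rw [norm_smul, Real.norm_two]
      _ = ‖(x + (2 * t) • y) + (x + (2 * t) • z)‖ := by congr 1; module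
      _ ≤ _ := norm_add_le _ _
  simp only [Function.comp_apply]
  rw [← add_div, div_le_div_iff₀ ht (by positivity)]
  nlinarith [mul_le_mul_of_nonneg_left hmid (norm_nonneg x)]

lemma rhoP_add_smul_self (x y : X) (s : ℝ) :
    rhoP x (y + s • x) = rhoP x y + s * ‖x‖ ^ 2 := by
  have hle := rhoP_add_le x y (s • x)
  have hge := rhoP_add_le x (y + s • x) ((-s) • x)
  rw [rhoP_smul_self] at hle hge
  rw [show y + s • x + (-s) • x = y by module] at hge
  linarith

noncomputable def rhoPLinearMap (x : X)
    (hadd : ∀ y₁ y₂ : X, rhoP x (y₁ + y₂) = rhoP x y₁ + rhoP x y₂) : X →ₗ[ℝ] ℝ where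
  toFun := rhoP x
  map_add' := hadd
  map_smul' c y := by
    have hneg : rhoP x (-y) = -rhoP x y := map_neg (AddMonoidHom.mk' (rhoP x) hadd) y
    rcases lt_trichotomy c 0 with hc | rfl | hc
    · rw [show c • y = (-c) • -y by module, rhoP_smul_of_pos x _ (neg_pos.2 hc), hneg]
      simp
    · simp [rhoP_zero]
    · exact rhoP_smul_of_pos x y hc

lemma isCoatom_ker_rhoPLinearMap {x : X} (hx : x ≠ 0)
    (hadd : ∀ y₁ y₂ : X, rhoP x (y₁ + y₂) = rhoP x y₁ + rhoP x y₂) :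
    IsCoatom (LinearMap.ker (rhoPLinearMap x hadd)) := by
  refine LinearMap.isCoatom_ker_of_surjective (LinearMap.surjective_of_ne_zero fun h => ?_)
  exact rhoP_self_ne_zero hx (LinearMap.congr_fun h x)

lemma rhoP_add_of_isCoatom {x : X} {M : Submodule ℝ X} (hM : IsCoatom M) (hxM : x ∉ M)
    (hzero : ∀ m ∈ M, rhoP x m = 0) (y₁ y₂ : X) :
    rhoP x (y₁ + y₂) = rhoP x y₁ + rhoP x y₂ := by
  have hdecomp : ∀ y : X, ∃ m ∈ M, ∃ s : ℝ, y = m + s • x := by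
    intro y
    obtain ⟨m, z, hm, hz, rfl⟩ := Submodule.codisjoint_iff_exists_add_eq.1
      (Submodule.isCompl_span_singleton_of_isCoatom_of_notMem hM hxM).codisjoint y
    obtain ⟨s, rfl⟩ := Submodule.mem_span_singleton.1 hz
    exact ⟨m, hm, s, rfl⟩
  have hval : ∀ m ∈ M, ∀ s : ℝ, rhoP x (m + s • x) = s * ‖x‖ ^ 2 := by
    intro m hm s
    rw [rhoP_add_smul_self, hzero m hm, zero_add]
  obtain ⟨m₁, hm₁, s₁, rfl⟩ := hdecomp y₁
  obtain ⟨m₂, hm₂, s₂, rfl⟩ := hdecomp y₂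
  rw [show m₁ + s₁ • x + (m₂ + s₂ • x) = (m₁ + m₂) + (s₁ + s₂) • x by module,
    hval _ (M.add_mem hm₁ hm₂), hval m₁ hm₁, hval m₂ hm₂, add_mul]

end NormDerivative

/-- x is ρ₊-smooth iff its ρ₊-orthogonality set is a linear subspace of codimension one
(i.e. a maximal proper linear subspace, a coatom in the lattice of submodules). -/
theorem rhoP_smooth_iff_orthogonal_set_maximal_subspace
    {X : Type*} [NormedAddCommGroup X] [NormedSpace ℝ X] (x : X) (hx : x ≠ 0) :
    (∀ y₁ y₂ : X, rhoP x (y₁ + y₂) = rhoP x y₁ + rhoP x y₂) ↔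
      ∃ M : Submodule ℝ X, (M : Set X) = {y : X | rhoP x y = 0} ∧ IsCoatom M := by
  constructor
  · intro hadd
    exact ⟨_, rfl, isCoatom_ker_rhoPLinearMap hx hadd⟩
  · rintro ⟨M, hM, hcoatom⟩
    have hzero : ∀ m ∈ M, rhoP x m = 0 := fun m hm => by
      rwa [← SetLike.mem_coe, hM] at hm
    exact rhoP_add_of_isCoatom hcoatom (fun hxM => rhoP_self_ne_zero hx (hzero x hxM)) hzero
end

section
/- Let Y be a real normed linear space, let n be a positive integer, and let T : ℓ₁ⁿ → Y be a nonzero bounded linear operator, where ℓ₁ⁿ is ℝⁿ with the norm ‖(a₁,…,aₙ)‖₁ = Σ|aᵢ|. Then T is ρ₊-smooth in L(ℓ₁ⁿ, Y) if and only if there exists an extreme point u₀ of the closed unit ball of ℓ₁ⁿ such that M_T = {u₀, −u₀} and Tu₀ is a ρ₊-smooth point of Y. -/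
open Filter Set

/-- ℓ₁ⁿ : ℝⁿ with the norm ‖(a₁,…,aₙ)‖₁ = Σᵢ |aᵢ|. -/
noncomputable abbrev l1 (n : ℕ) := PiLp 1 (fun _ : Fin n => ℝ)

/-! An operator `T : ℓ₁ⁿ → Y` attains its norm at a basis vector: `‖T‖ = maxᵢ ‖T 𝐞ᵢ‖`.
If the maximum is attained at a single index `i`, then also `‖T + t A‖ = ‖T 𝐞ᵢ + t A 𝐞ᵢ‖` for
small `t > 0`, so `ρ'₊(T, A) = ρ'₊(T 𝐞ᵢ, A 𝐞ᵢ)` and ρ₊-smoothness of `T` is that of `T 𝐞ᵢ`.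
If it is attained at two indices `i ≠ j`, the restrictions `A`, `B` of `T` to the coordinates
`i`, `j` satisfy `ρ'₊(T, A) = ρ'₊(T, B) = ρ'₊(T, A + B) = ‖T‖²`, so `T` is not ρ₊-smooth.
Since the extreme points of the unit ball of ℓ₁ⁿ are the `±𝐞ᵢ`, a unique maximising index `i`
is the same as `M_T = {𝐞ᵢ, -𝐞ᵢ}`. -/

open Topology Finset

local notation:max "𝐞" i:max => (PiLp.single 1 i (1 : ℝ) : l1 _)

def RhoPAdditive {X : Type*} [NormedAddCommGroup X] [NormedSpace ℝ X] (x : X) : Prop :=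
  ∀ y₁ y₂ : X, rhoP x (y₁ + y₂) = rhoP x y₁ + rhoP x y₂

section NormDerivative

variable {X : Type*} [NormedAddCommGroup X] [NormedSpace ℝ X]

lemma rhoP_neg_left (x y : X) : rhoP (-x) y = rhoP x (-y) := by
  unfold rhoP
  congr 1
  funext t
  rw [norm_neg, show -x + t • y = -(x + t • -y) by module, norm_neg]

lemma RhoPAdditive.neg {x : X} (h : RhoPAdditive x) : RhoPAdditive (-x) := by
  intro y₁ y₂
  simpa only [rhoP_neg_left, neg_add] using h (-y₁) (-y₂)

lemma rhoP_congr {X' : Type*} [NormedAddCommGroup X'] [NormedSpace ℝ X']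
    {x y : X} {x' y' : X'} (hx : ‖x‖ = ‖x'‖)
    (h : ∀ᶠ t in 𝓝[>] (0 : ℝ), ‖x + t • y‖ = ‖x' + t • y'‖) :
    rhoP x y = rhoP x' y' := by
  unfold rhoP
  simp only [limUnder]
  rw [Filter.map_congr (m₂ := fun t : ℝ => ‖x'‖ * (‖x' + t • y'‖ - ‖x'‖) / t)]
  filter_upwards [h] with t ht
  rw [ht, hx]

lemma rhoP_eq_norm_mul_norm {x y : X} (h : ∀ t : ℝ, 0 < t → ‖x + t • y‖ = (1 + t) * ‖x‖) :
    rhoP x y = ‖x‖ * ‖x‖ := by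
  refine Tendsto.limUnder_eq (tendsto_const_nhds.congr' ?_)
  filter_upwards [self_mem_nhdsWithin] with t (ht : 0 < t)
  rw [h t ht]
  field_simp
  ring

end NormDerivative

section L1

variable {n : ℕ}

lemma norm_single_one (i : Fin n) : ‖𝐞 i‖ = 1 := by
  simp [PiLp.norm_single]

lemma sum_smul_single_one (x : l1 n) : ∑ i, x i • 𝐞 i = x := by
  ext j
  simp [Pi.single_apply]

lemma eq_smul_single_one {x : l1 n} {i : Fin n} (h : ∀ j, j ≠ i → x j = 0) : x = x i • 𝐞 i := by
  ext j
  by_cases hj : j = i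
  · subst hj; simp
  · simp [hj, h j hj]

lemma single_one_eq_or_eq_neg_iff {i j : Fin n} : (𝐞 j = 𝐞 i ∨ 𝐞 j = -𝐞 i) ↔ j = i := by
  refine ⟨fun h => ?_, fun h => Or.inl (h ▸ rfl)⟩
  by_contra hji
  rcases h with h | h <;> simpa [PiLp.single_apply, hji] using congrArg (· j) h

lemma single_one_mem_extremePoints (i : Fin n) :
    (𝐞 i) ∈ (Metric.closedBall (0 : l1 n) 1).extremePoints ℝ := by
  refine exposedPoints_subset_extremePoints ⟨by simp, PiLp.proj 1 _ i, fun y hy => ?_⟩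
  rw [mem_closedBall_zero_iff, PiLp.norm_eq_of_L1, ← Finset.add_sum_erase _ _ (mem_univ i)] at hy
  have hrest : 0 ≤ ∑ k ∈ univ.erase i, ‖y k‖ := sum_nonneg fun k _ => norm_nonneg _
  have hyi : y i ≤ 1 := (le_abs_self _).trans (by rw [← Real.norm_eq_abs]; linarith)
  refine ⟨by simpa using hyi, fun h1 => ?_⟩
  replace h1 : y i = 1 := le_antisymm hyi (by simpa using h1)
  have hzero : ∀ k ∈ univ.erase i, ‖y k‖ = 0 :=
    (sum_eq_zero_iff_of_nonneg fun k _ => norm_nonneg _).1 (by rw [h1, norm_one] at hy; linarith)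
  rw [eq_smul_single_one fun j hj => norm_eq_zero.1 (hzero j (mem_erase.2 ⟨hj, mem_univ j⟩)),
    h1, one_smul]

-- Otherwise `u = ∑ |u k| • (±𝐞 k)` is a convex combination of points of the ball other than `u`.
lemma exists_eq_single_one_or_eq_neg_of_mem_extremePoints {u : l1 n}
    (hu : u ∈ (Metric.closedBall (0 : l1 n) 1).extremePoints ℝ) (hnorm : ‖u‖ = 1) :
    ∃ i, u = 𝐞 i ∨ u = -𝐞 i := by
  by_contra! hne
  let z : Fin n → l1 n := fun k => if 0 ≤ u k then 𝐞 k else -𝐞 k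
  have hz : ∀ k, z k ∈ Metric.closedBall (0 : l1 n) 1 \ {u} := fun k => by
    by_cases hk : 0 ≤ u k <;> simp [z, hk, Ne.symm (hne k).1, Ne.symm (hne k).2]
  have hconv := ((convex_closedBall (0 : l1 n) 1).mem_extremePoints_iff_convex_sdiff.1 hu).2
  have hu_comb : ∑ k, ‖u k‖ • z k = u := by
    conv_rhs => rw [← sum_smul_single_one u]
    refine sum_congr rfl fun k _ => ?_
    by_cases hk : 0 ≤ u k
    · simp [z, hk, abs_of_nonneg hk]
    · simp [z, hk, abs_of_neg (not_le.1 hk)]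
  have hmem := hconv.sum_mem (fun k _ => norm_nonneg (u k))
    (by rw [← PiLp.norm_eq_of_L1, hnorm]) (fun k _ => hz k)
  rw [hu_comb] at hmem
  exact hmem.2 rfl

end L1

section Operators

variable {n : ℕ} {Y : Type*} [NormedAddCommGroup Y] [NormedSpace ℝ Y]

lemma norm_apply_le_sum (S : l1 n →L[ℝ] Y) (x : l1 n) :
    ‖S x‖ ≤ ∑ i, |x i| * ‖S (𝐞 i)‖ := by
  conv_lhs => rw [← sum_smul_single_one x]
  simpa [norm_smul] using norm_sum_le univ fun i => x i • S (𝐞 i)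

lemma norm_apply_single_one_le (S : l1 n →L[ℝ] Y) (i : Fin n) : ‖S (𝐞 i)‖ ≤ ‖S‖ := by
  simpa [norm_single_one] using S.le_opNorm (𝐞 i)

lemma opNorm_eq_norm_apply_single_one (S : l1 n →L[ℝ] Y) {i : Fin n}
    (h : ∀ j, ‖S (𝐞 j)‖ ≤ ‖S (𝐞 i)‖) : ‖S‖ = ‖S (𝐞 i)‖ := by
  refine le_antisymm (S.opNorm_le_bound (norm_nonneg _) fun x => ?_)
    (norm_apply_single_one_le S i)
  calc ‖S x‖ ≤ ∑ j, |x j| * ‖S (𝐞 j)‖ := norm_apply_le_sum S x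
    _ ≤ ∑ j, |x j| * ‖S (𝐞 i)‖ := by gcongr with j; exact h j
    _ = ‖S (𝐞 i)‖ * ‖x‖ := by simp [← sum_mul, PiLp.norm_eq_of_L1, mul_comm]

lemma exists_norm_apply_single_one_eq_opNorm (hn : 0 < n) (S : l1 n →L[ℝ] Y) :
    ∃ i, ‖S (𝐞 i)‖ = ‖S‖ := by
  obtain ⟨i, -, hi⟩ := exists_max_image univ (fun i => ‖S (𝐞 i)‖) ⟨⟨0, hn⟩, mem_univ _⟩
  exact ⟨i, (opNorm_eq_norm_apply_single_one S fun j => hi j (mem_univ j)).symm⟩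

noncomputable def coordOp (i : Fin n) (y : Y) : l1 n →L[ℝ] Y :=
  (PiLp.proj 1 (fun _ : Fin n => ℝ) i).smulRight y

@[simp]
lemma coordOp_apply_single_one (i j : Fin n) (y : Y) :
    coordOp i y (𝐞 j) = if j = i then y else 0 := by
  by_cases h : j = i <;> simp [coordOp, h]

-- `‖T + t A‖ = (1 + t) ‖T‖` for `t > 0`, attained at `𝐞 i`.
lemma rhoP_sum_coordOp {T : l1 n →L[ℝ] Y} {i : Fin n} {s : Finset (Fin n)}
    (hmax : ‖T (𝐞 i)‖ = ‖T‖) (hi : i ∈ s) :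
    rhoP T (∑ k ∈ s, coordOp k (T (𝐞 k))) = ‖T‖ * ‖T‖ := by
  refine rhoP_eq_norm_mul_norm fun t ht => ?_
  have happly : ∀ j, (T + t • ∑ k ∈ s, coordOp k (T (𝐞 k))) (𝐞 j)
      = (1 + if j ∈ s then t else 0) • T (𝐞 j) := fun j => by
    split_ifs with hj <;> simp [hj, add_smul]
  have hscale : ∀ j, ‖(T + t • ∑ k ∈ s, coordOp k (T (𝐞 k))) (𝐞 j)‖
      = (1 + if j ∈ s then t else 0) * ‖T (𝐞 j)‖ := fun j => by
    rw [happly, norm_smul, Real.norm_of_nonneg (by split_ifs <;> linarith)]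
  rw [opNorm_eq_norm_apply_single_one _ (i := i) fun j => ?_, hscale, if_pos hi, hmax]
  rw [hscale, hscale, if_pos hi, hmax]
  gcongr
  · split_ifs <;> linarith
  · exact norm_apply_single_one_le T j

lemma eventually_opNorm_add_smul_eq {T : l1 n →L[ℝ] Y} {i : Fin n}
    (hi : ∀ j, ‖T (𝐞 j)‖ = ‖T‖ ↔ j = i) (A : l1 n →L[ℝ] Y) :
    ∀ᶠ t in 𝓝[>] (0 : ℝ), ‖T + t • A‖ = ‖T (𝐞 i) + t • A (𝐞 i)‖ := by
  have hsmall : ∀ᶠ t in 𝓝 (0 : ℝ), ∀ j, j ≠ i → ‖T (𝐞 j)‖ + 2 * t * ‖A‖ < ‖T‖ := by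
    refine eventually_all.2 fun j => ?_
    by_cases hj : j = i
    · exact .of_forall fun _ h => absurd hj h
    have hlt : ‖T (𝐞 j)‖ < ‖T‖ := (norm_apply_single_one_le T j).lt_of_ne (mt (hi j).1 hj)
    filter_upwards [(by fun_prop : Continuous fun t : ℝ => ‖T (𝐞 j)‖ + 2 * t * ‖A‖).continuousAt
      |>.eventually_lt continuousAt_const (by simpa using hlt)] with t ht _ using ht
  filter_upwards [nhdsWithin_le_nhds hsmall, self_mem_nhdsWithin] with t hsmall (ht : 0 < t)
  have hsmul : ∀ j, ‖t • A (𝐞 j)‖ ≤ t * ‖A‖ := fun j => by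
    rw [norm_smul, Real.norm_of_nonneg ht.le]
    exact mul_le_mul_of_nonneg_left (norm_apply_single_one_le A j) ht.le
  refine (opNorm_eq_norm_apply_single_one (i := i) _ fun j => ?_).trans (by simp)
  by_cases hj : j = i
  · rw [hj]
  have := hsmall j hj
  calc ‖(T + t • A) (𝐞 j)‖ ≤ ‖T (𝐞 j)‖ + ‖t • A (𝐞 j)‖ := norm_add_le _ _
    _ ≤ ‖T (𝐞 i)‖ - ‖t • A (𝐞 i)‖ := by linarith [hsmul i, hsmul j, (hi i).2 rfl]
    _ ≤ ‖(T + t • A) (𝐞 i)‖ := norm_sub_le_norm_add _ _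

lemma rhoP_eq_rhoP_apply_single_one {T : l1 n →L[ℝ] Y} {i : Fin n}
    (hi : ∀ j, ‖T (𝐞 j)‖ = ‖T‖ ↔ j = i) (A : l1 n →L[ℝ] Y) :
    rhoP T A = rhoP (T (𝐞 i)) (A (𝐞 i)) :=
  rhoP_congr ((hi i).2 rfl).symm (eventually_opNorm_add_smul_eq hi A)

lemma exists_unique_norm_apply_single_one_eq_opNorm (hn : 0 < n) {T : l1 n →L[ℝ] Y} (hT : T ≠ 0)
    (h : ∀ A B : l1 n →L[ℝ] Y, rhoP T (A + B) = rhoP T A + rhoP T B) :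
    ∃ i, ∀ j, ‖T (𝐞 j)‖ = ‖T‖ ↔ j = i := by
  obtain ⟨i, hi⟩ := exists_norm_apply_single_one_eq_opNorm hn T
  refine ⟨i, fun j => ⟨fun hj => ?_, fun hji => hji ▸ hi⟩⟩
  by_contra hji
  have hA := rhoP_sum_coordOp hi (mem_singleton_self i)
  have hB := rhoP_sum_coordOp hj (mem_singleton_self j)
  have hAB := rhoP_sum_coordOp hi (mem_insert_self i {j})
  rw [sum_singleton] at hA hB
  rw [sum_pair (Ne.symm hji), h, hA, hB] at hAB
  exact hT (norm_eq_zero.1 (by nlinarith))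

lemma normAttainSet_eq_pair {T : l1 n →L[ℝ] Y} {i : Fin n} (hi : ∀ j, ‖T (𝐞 j)‖ = ‖T‖ ↔ j = i) :
    {x : l1 n | ‖x‖ = 1 ∧ ‖T x‖ = ‖T‖} = {𝐞 i, -𝐞 i} := by
  ext x
  refine ⟨fun ⟨hx, hTx⟩ => ?_, ?_⟩
  · have hgap : ∀ k, 0 ≤ |x k| * (‖T‖ - ‖T (𝐞 k)‖) := fun k =>
      mul_nonneg (abs_nonneg _) (sub_nonneg.2 (norm_apply_single_one_le T k))
    have hsum : ∑ k, |x k| * (‖T‖ - ‖T (𝐞 k)‖) = 0 := by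
      refine le_antisymm ?_ (sum_nonneg fun k _ => hgap k)
      calc ∑ k, |x k| * (‖T‖ - ‖T (𝐞 k)‖) = ‖x‖ * ‖T‖ - ∑ k, |x k| * ‖T (𝐞 k)‖ := by
            simp [mul_sub, ← sum_mul, PiLp.norm_eq_of_L1]
        _ ≤ 0 := by rw [hx, one_mul]; linarith [norm_apply_le_sum T x]
    have hzero : ∀ k, k ≠ i → x k = 0 := fun k hk => by
      have hlt : ‖T (𝐞 k)‖ < ‖T‖ := (norm_apply_single_one_le T k).lt_of_ne (mt (hi k).1 hk)
      have := (sum_eq_zero_iff_of_nonneg fun k _ => hgap k).1 hsum k (mem_univ k)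
      exact abs_eq_zero.1 ((mul_eq_zero.1 this).resolve_right (sub_ne_zero.2 hlt.ne'))
    rw [eq_smul_single_one hzero] at hx ⊢
    rw [norm_smul, norm_single_one, mul_one, Real.norm_eq_abs] at hx
    rcases abs_eq zero_le_one |>.1 hx with h | h <;> simp [h]
  · rintro (rfl | rfl) <;> simp [(hi i).2 rfl]

end Operators

/-- A nonzero T ∈ L(ℓ₁ⁿ, Y) is ρ₊-smooth iff M_T = {u₀, -u₀} for some extreme point u₀ of
the closed unit ball of ℓ₁ⁿ and T u₀ is a ρ₊-smooth point of Y. -/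
theorem rhoP_smooth_iff_l1n
    {Y : Type*} [NormedAddCommGroup Y] [NormedSpace ℝ Y] {n : ℕ} (hn : 0 < n)
    (T : l1 n →L[ℝ] Y) (hT : T ≠ 0) :
    (∀ A B : l1 n →L[ℝ] Y, rhoP T (A + B) = rhoP T A + rhoP T B) ↔
      ∃ u₀ : l1 n,
        u₀ ∈ (Metric.closedBall (0 : l1 n) 1).extremePoints ℝ ∧
        {x : l1 n | ‖x‖ = 1 ∧ ‖T x‖ = ‖T‖} = {u₀, -u₀} ∧
        (∀ y₁ y₂ : Y, rhoP (T u₀) (y₁ + y₂) = rhoP (T u₀) y₁ + rhoP (T u₀) y₂) := by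
  constructor
  · intro h
    obtain ⟨i, hi⟩ := exists_unique_norm_apply_single_one_eq_opNorm hn hT h
    refine ⟨𝐞 i, single_one_mem_extremePoints i, normAttainSet_eq_pair hi, fun y₁ y₂ => ?_⟩
    simpa [rhoP_eq_rhoP_apply_single_one hi] using h (coordOp i y₁) (coordOp i y₂)
  · rintro ⟨u₀, hext, hM, hsmooth⟩
    have hu₀ : ‖u₀‖ = 1 := ((Set.ext_iff.1 hM u₀).2 (mem_insert u₀ _)).1
    obtain ⟨i, hu₀i⟩ := exists_eq_single_one_or_eq_neg_of_mem_extremePoints hext hu₀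
    have hM' : {x : l1 n | ‖x‖ = 1 ∧ ‖T x‖ = ‖T‖} = {𝐞 i, -𝐞 i} := by
      rcases hu₀i with rfl | rfl
      · exact hM
      · rw [hM, neg_neg, pair_comm]
    have hi : ∀ j, ‖T (𝐞 j)‖ = ‖T‖ ↔ j = i := fun j => by
      simpa [norm_single_one, single_one_eq_or_eq_neg_iff] using Set.ext_iff.1 hM' (𝐞 j)
    have hsmooth' : RhoPAdditive (T (𝐞 i)) := by
      rcases hu₀i with rfl | rfl
      · exact hsmooth
      · simpa using RhoPAdditive.neg hsmooth
    intro A B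
    simpa [rhoP_eq_rhoP_apply_single_one hi] using hsmooth' (A (𝐞 i)) (B (𝐞 i))
end

section
/- In the space ℓ∞² (ℝ² with the norm ‖(a,b)‖ = max{|a|,|b|}), let x = (1,1). Then the set x^{⊥₊} = {y ∈ ℓ∞² : ρ'₊(x,y) = 0} equals {(−α, 0) : α ≥ 0} ∪ {(0, −β) : β ≥ 0}. -/
open Filter Set

/-!
Near `t = 0⁺` every coordinate of `1 + t • y` is positive, so the sup norm of `1 + t • y` is
`1 + t * maxᵢ yᵢ`: the norm is affine along the ray, and `ρ'₊(1, y)` is the largest coordinate of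
`y`. For `y ∈ ℝ²` the condition `max y₀ y₁ = 0` says that one coordinate vanishes and the other
is nonpositive.
-/

open Topology

lemma rhoP_eq_of_eventually_norm_add_smul {X : Type*} [NormedAddCommGroup X] [NormedSpace ℝ X]
    {x y : X} {c : ℝ} (h : ∀ᶠ t in 𝓝[>] (0 : ℝ), ‖x + t • y‖ = ‖x‖ + t * c) :
    rhoP x y = ‖x‖ * c := by
  refine Tendsto.limUnder_eq (tendsto_const_nhds.congr' ?_)
  filter_upwards [h, self_mem_nhdsWithin] with t ht (ht0 : 0 < t)
  rw [ht]
  field_simp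
  ring

section SupNorm

variable {ι : Type*} [Fintype ι] [Nonempty ι]

lemma norm_one_add_smul_eq {y : ι → ℝ} {t : ℝ} (ht : 0 ≤ t) (hty : t * ‖y‖ ≤ 1) :
    ‖1 + t • y‖ = 1 + t * Finset.univ.sup' Finset.univ_nonempty y := by
  have hpos : ∀ i, 0 ≤ 1 + t * y i := fun i => by
    nlinarith [neg_abs_le (y i), norm_le_pi_norm y i, Real.norm_eq_abs (y i)]
  have hcoord : ∀ i, ‖(1 + t • y) i‖ = 1 + t * y i := fun i => by
    simp only [Pi.add_apply, Pi.one_apply, Pi.smul_apply, smul_eq_mul, Real.norm_eq_abs,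
      abs_of_nonneg (hpos i)]
  obtain ⟨j, -, hj⟩ := Finset.univ.exists_mem_eq_sup' Finset.univ_nonempty y
  refine le_antisymm ((pi_norm_le_iff_of_nonneg (by rw [hj]; exact hpos j)).2 fun i => ?_) ?_
  · rw [hcoord]
    gcongr
    exact Finset.le_sup' y (Finset.mem_univ i)
  · rw [hj, ← hcoord]
    exact norm_le_pi_norm _ j

lemma rhoP_one (y : ι → ℝ) : rhoP (1 : ι → ℝ) y = Finset.univ.sup' Finset.univ_nonempty y := by
  have hsmall : ∀ᶠ t in 𝓝[>] (0 : ℝ), t * ‖y‖ < 1 := by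
    refine Tendsto.eventually_lt_const one_pos ?_
    exact ((continuous_mul_const ‖y‖).tendsto' 0 0 (zero_mul _)).mono_left nhdsWithin_le_nhds
  rw [rhoP_eq_of_eventually_norm_add_smul, norm_one, one_mul]
  filter_upwards [hsmall, self_mem_nhdsWithin] with t ht (ht0 : 0 < t)
  rw [norm_one, norm_one_add_smul_eq ht0.le ht.le]

end SupNorm

lemma rhoP_one_one (y : Fin 2 → ℝ) : rhoP (![1, 1] : Fin 2 → ℝ) y = max (y 0) (y 1) := by
  have hone : (![1, 1] : Fin 2 → ℝ) = 1 := by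
    ext i
    fin_cases i <;> rfl
  rw [hone, rhoP_one]
  exact le_antisymm (Finset.sup'_le _ _ (by simp [Fin.forall_fin_two]))
    (max_le (Finset.le_sup' y (Finset.mem_univ 0)) (Finset.le_sup' y (Finset.mem_univ 1)))

lemma fin_two_eq_vec_iff (y : Fin 2 → ℝ) (a b : ℝ) : y = ![a, b] ↔ y 0 = a ∧ y 1 = b := by
  simp [funext_iff, Fin.forall_fin_two]

/-- In ℓ∞² (that is, Fin 2 → ℝ with the sup norm), for x = (1,1), the set
x^{⊥₊} = {y : ρ'₊(x,y) = 0} equals {(-α,0) : α ≥ 0} ∪ {(0,-β) : β ≥ 0}. -/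
theorem rhoP_orthogonality_set_linfty2 :
    {y : Fin 2 → ℝ | rhoP (![1, 1] : Fin 2 → ℝ) y = 0} =
      {y : Fin 2 → ℝ | ∃ α : ℝ, 0 ≤ α ∧ y = ![-α, 0]} ∪
        {y : Fin 2 → ℝ | ∃ β : ℝ, 0 ≤ β ∧ y = ![0, -β]} := by
  ext y
  simp only [mem_union, mem_ofPred_eq, rhoP_one_one, max_eq_iff, fin_two_eq_vec_iff]
  constructor
  · rintro (⟨h0, h1⟩ | ⟨h1, h0⟩)
    · exact Or.inr ⟨-y 1, by linarith, by linarith, by linarith⟩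
    · exact Or.inl ⟨-y 0, by linarith, by linarith, by linarith⟩
  · rintro (⟨α, hα, h0, h1⟩ | ⟨β, hβ, h0, h1⟩)
    · exact Or.inr ⟨h1, by linarith⟩
    · exact Or.inl ⟨h0, by linarith⟩
end

section
/- In the space ℓ∞² (ℝ² with the norm ‖(a,b)‖ = max{|a|,|b|}), let x = (1,1). Then the set x^{⊥₋} = {y ∈ ℓ∞² : ρ'₋(x,y) = 0} equals {(α, 0) : α ≥ 0} ∪ {(0, β) : β ≥ 0}. -/
open Filter Set

/-!
For `t < 0` close to `0`, every coordinate of `1 + t • y` in `ι → ℝ` is positive, so its sup norm is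
`maxᵢ (1 + t yᵢ) = 1 + t · minᵢ yᵢ` on the nose. The difference quotient defining `ρ'₋(1, y)` is
therefore eventually constant, and `ρ'₋(1, y) = minᵢ yᵢ`. In the plane, `min y₀ y₁ = 0` says that one
coordinate vanishes and the other is nonnegative.
-/

theorem pi_norm_one_add_smul_of_nonpos {ι : Type*} [Fintype ι] [Nonempty ι] {y : ι → ℝ} {t : ℝ}
    (ht : t ≤ 0) (hty : -1 < t * ‖y‖) :
    ‖1 + t • y‖ = 1 + t * ⨅ i, y i := by
  have hpos : ∀ i, 0 < 1 + t * y i := fun i => by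
    have : t * ‖y‖ ≤ t * y i :=
      mul_le_mul_of_nonpos_left ((le_abs_self _).trans (norm_le_pi_norm y i)) ht
    linarith
  obtain ⟨i₀, hi₀⟩ := exists_eq_ciInf_of_finite (f := y)
  have hcoord : ∀ i, ‖(1 + t • y) i‖ = 1 + t * y i := fun i => by
    simp [Real.norm_of_nonneg (hpos i).le]
  apply le_antisymm
  · refine (pi_norm_le_iff_of_nonneg (hi₀ ▸ (hpos i₀).le)).2 fun i => ?_
    rw [hcoord]
    nlinarith [Finite.ciInf_le y i]
  · have := norm_le_pi_norm (1 + t • y) i₀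
    rwa [hcoord, hi₀] at this

theorem rhoM_one_eq_iInf {ι : Type*} [Fintype ι] [Nonempty ι] (y : ι → ℝ) :
    rhoM (1 : ι → ℝ) y = ⨅ i, y i := by
  apply Tendsto.limUnder_eq
  have hsmall : ∀ᶠ t in nhdsWithin (0 : ℝ) (Iio 0), -1 < t * ‖y‖ := by
    have : Tendsto (fun t : ℝ => t * ‖y‖) (nhds 0) (nhds 0) :=
      (continuous_mul_const ‖y‖).tendsto' 0 0 (zero_mul _)
    exact (this.mono_left nhdsWithin_le_nhds).eventually (Ioi_mem_nhds (by norm_num))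
  refine tendsto_const_nhds.congr' ?_
  filter_upwards [hsmall, self_mem_nhdsWithin] with t hty (ht : t < 0)
  rw [pi_norm_one_add_smul_of_nonpos ht.le hty, norm_one (α := ι → ℝ), one_mul,
    add_sub_cancel_left, mul_div_cancel_left₀ _ ht.ne]

theorem ciInf_fin_two {α : Type*} [ConditionallyCompleteLinearOrder α] (y : Fin 2 → α) :
    ⨅ i, y i = min (y 0) (y 1) :=
  eq_of_forall_le_iff fun a => by simp [le_ciInf_iff (Finite.bddBelow_range y), Fin.forall_fin_two]

/-- In ℓ∞² (that is, Fin 2 → ℝ with the sup norm), for x = (1,1), the set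
x^{⊥₋} = {y : ρ'₋(x,y) = 0} equals {(α,0) : α ≥ 0} ∪ {(0,β) : β ≥ 0}. -/
theorem rhoM_orthogonality_set_linfty2 :
    {y : Fin 2 → ℝ | rhoM (![1, 1] : Fin 2 → ℝ) y = 0} =
      {y : Fin 2 → ℝ | ∃ α : ℝ, 0 ≤ α ∧ y = ![α, 0]} ∪
        {y : Fin 2 → ℝ | ∃ β : ℝ, 0 ≤ β ∧ y = ![0, β]} := by
  have hx : (![1, 1] : Fin 2 → ℝ) = 1 := by
    ext i; fin_cases i <;> rfl
  ext y
  rw [mem_ofPred_eq, hx, rhoM_one_eq_iInf, ciInf_fin_two, min_eq_iff]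
  simp only [mem_union, mem_ofPred_eq, funext_iff, Fin.forall_fin_two, Matrix.cons_val_zero,
    Matrix.cons_val_one, Matrix.cons_val_fin_one, existsAndEq, true_and, exists_eq_right_right']
  grind
end
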